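/- Consider the p-periodic discrete-time SIS system x(k+1) = x(k) + h((I - X(k))B̄(k) - D(k))x(k) with initial conditions in [0,1]^n. If ρ(M(p-1)⋯M(1)M(0)) < 1, where M(k) = I - hD(k) + hB̄(k), then the disease-free equilibrium x = 0 is globally exponentially stable: there exist α > 0 and 0 ≤ η < 1 such that ‖x(k)‖ ≤ α‖x(0)‖ηᵏ for all k ≥ 0 and all x(0) ∈ [0,1]^n. -/

import Mathlib

open Matrix Filter

noncomputable def specRad {m : Type*} [Fintype m] [DecidableEq m] (M : Matrix m m ℝ) : ℝ :=
  sSup {r : ℝ | ∃ μ ∈ spectrum ℂ (M.map (algebraMap ℝ ℂ)), r = ‖μ‖}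

noncomputable def mono {n : ℕ} (p : ℕ) (M : ℕ → Matrix (Fin n) (Fin n) ℝ) (k : ℕ) :
    Matrix (Fin n) (Fin n) ℝ :=
  (List.range p).foldl (fun A i => M (k + i) * A) 1

def SISdyn {n : ℕ} (h : ℝ) (β : ℕ → Fin n → Fin n → ℝ) (δ : ℕ → Fin n → ℝ)
    (x : ℕ → Fin n → ℝ) : Prop :=
  ∀ k i, x (k + 1) i = x k i + h * ((1 - x k i) * (∑ j, β k i j * x k j) - δ k i * x k i)

def MatIrreducible {n : ℕ} (M : Matrix (Fin n) (Fin n) ℝ) : Prop :=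
  ∀ S : Set (Fin n), S.Nonempty → Sᶜ.Nonempty → ∃ i ∈ S, ∃ j ∈ Sᶜ, M i j ≠ 0

/-! Because `[0,1]^n` is invariant and the term `-h x_i ∑ⱼ β_ij x_j` is nonpositive, the
entrywise nonnegative matrices `M(k)` bound the state componentwise:
`0 ≤ x(k) ≤ M(k-1)⋯M(0) x(0)`. Writing `k = mp + r`, this product is `M(r-1)⋯M(0) Φ^m` with
`Φ` the monodromy matrix, and Gelfand's formula turns `ρ(Φ) < 1` into `‖Φ^m‖ ≤ C t^m` for
some `t < 1`; the decay rate is `η = t^(1/p)`. -/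

section Mono

variable {n : ℕ} {M : ℕ → Matrix (Fin n) (Fin n) ℝ}

theorem mono_succ (r k : ℕ) : mono (r + 1) M k = M (k + r) * mono r M k := by
  simp only [mono, List.range_succ, List.foldl_append, List.foldl_cons, List.foldl_nil]

theorem mono_add (a b k : ℕ) : mono (a + b) M k = mono b M (k + a) * mono a M k := by
  induction b with
  | zero => simp [mono]
  | succ b ih => rw [← add_assoc, mono_succ, ih, mono_succ, Matrix.mul_assoc, add_assoc]

theorem mono_periodic {p : ℕ} (hM : Function.Periodic M p) (r : ℕ) :
    Function.Periodic (mono r M) p := fun k => by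
  induction r with
  | zero => rfl
  | succ r ih => rw [mono_succ, mono_succ, ih, add_right_comm, hM]

theorem mono_nat_mul_period {p : ℕ} (hM : Function.Periodic M p) (r m : ℕ) :
    mono r M (m * p) = mono r M 0 := by
  simpa using (mono_periodic hM r).nat_mul_eq m

theorem mono_mul_period {p : ℕ} (hM : Function.Periodic M p) (m : ℕ) :
    mono (m * p) M 0 = mono p M 0 ^ m := by
  induction m with
  | zero => simp [mono]
  | succ m ih => rw [add_one_mul, mono_add, zero_add, mono_nat_mul_period hM, ih, pow_succ']

theorem mono_eq_mono_mod_mul_pow_div {p : ℕ} (hM : Function.Periodic M p) (k : ℕ) :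
    mono k M 0 = mono (k % p) M 0 * mono p M 0 ^ (k / p) := by
  conv_lhs => rw [← Nat.div_add_mod' k p]
  rw [mono_add, zero_add, mono_nat_mul_period hM, mono_mul_period hM]

end Mono

theorem exists_norm_pow_le_mul_pow_of_spectralRadius_lt_one {A : Type*} [NormedRing A]
    [NormedAlgebra ℂ A] [CompleteSpace A] {a : A} (ha : spectralRadius ℂ a < 1) :
    ∃ C > (0 : ℝ), ∃ t : ℝ, 0 < t ∧ t < 1 ∧ ∀ m : ℕ, ‖a ^ m‖ ≤ C * t ^ m := by
  obtain ⟨t, -, hat, ht1⟩ := ENNReal.lt_iff_exists_real_btwn.mp ha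
  have ht0 : 0 < t := ENNReal.ofReal_pos.mp (pos_of_gt hat)
  have hev : ∀ᶠ m : ℕ in atTop, ‖a ^ m‖ / t ^ m ≤ 1 := by
    have hgelfand := spectrum.pow_norm_pow_one_div_tendsto_nhds_spectralRadius a
    filter_upwards [hgelfand.eventually_lt_const hat, eventually_gt_atTop 0] with m hm hm0
    rw [ENNReal.ofReal_lt_ofReal_iff ht0, one_div,
      Real.rpow_inv_lt_iff_of_pos (norm_nonneg _) ht0.le (by positivity), Real.rpow_natCast] at hm
    exact (div_le_one (by positivity)).mpr hm.le
  obtain ⟨C, hC⟩ := (isBoundedUnder_of_eventually_le hev).bddAbove_range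
  refine ⟨max C 1, by positivity, t, ht0, ENNReal.ofReal_lt_one.mp ht1, fun m => ?_⟩
  rw [← div_le_iff₀ (by positivity)]
  exact (hC ⟨m, rfl⟩).trans (le_max_left _ _)

theorem pow_div_mul_pow_le_pow {η : ℝ} (hη0 : 0 ≤ η) (hη1 : η ≤ 1) {p : ℕ} (hp : 0 < p) (k : ℕ) :
    (η ^ p) ^ (k / p) * η ^ p ≤ η ^ k := by
  rw [← pow_succ, ← pow_mul]
  exact pow_le_pow_of_le_one hη0 hη1 (Nat.lt_mul_div_succ k hp).le

section LinftyOpNorm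

attribute [local instance] Matrix.linftyOpNormedRing Matrix.linftyOpNormedAlgebra

variable {m : Type*} [Fintype m] [DecidableEq m]

theorem Matrix.linfty_opNorm_map_ofReal (A : Matrix m m ℝ) :
    ‖A.map (algebraMap ℝ ℂ)‖ = ‖A‖ := by
  simp [Matrix.linfty_opNorm_def]

theorem spectralRadius_map_ofReal_le_specRad (A : Matrix m m ℝ) :
    spectralRadius ℂ (A.map (algebraMap ℝ ℂ)) ≤ ENNReal.ofReal (specRad A) := by
  refine iSup₂_le fun μ hμ => ?_
  have hbdd : BddAbove {r : ℝ | ∃ μ ∈ spectrum ℂ (A.map (algebraMap ℝ ℂ)), r = ‖μ‖} := by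
    obtain ⟨C, hC⟩ := (spectrum.isBounded (𝕜 := ℂ) (A.map (algebraMap ℝ ℂ))).exists_norm_le
    exact ⟨C, fun r ⟨ν, hν, hr⟩ => hr ▸ hC ν hν⟩
  rw [← ENNReal.ofReal_coe_nnreal, coe_nnnorm]
  exact ENNReal.ofReal_le_ofReal (le_csSup hbdd ⟨μ, hμ, rfl⟩)

theorem exists_norm_pow_le_mul_pow_of_specRad_lt_one (A : Matrix m m ℝ) (hA : specRad A < 1) :
    ∃ C > (0 : ℝ), ∃ t : ℝ, 0 < t ∧ t < 1 ∧ ∀ k : ℕ, ‖A ^ k‖ ≤ C * t ^ k := by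
  have hρ : spectralRadius ℂ (A.map (algebraMap ℝ ℂ)) < 1 :=
    (spectralRadius_map_ofReal_le_specRad A).trans_lt (ENNReal.ofReal_lt_one.mpr hA)
  obtain ⟨C, hC, t, ht0, ht1, hbound⟩ := exists_norm_pow_le_mul_pow_of_spectralRadius_lt_one hρ
  refine ⟨C, hC, t, ht0, ht1, fun k => ?_⟩
  rw [← Matrix.linfty_opNorm_map_ofReal, ← RingHom.mapMatrix_apply, map_pow]
  exact hbound k

theorem exists_norm_mono_mulVec_le {n p : ℕ} {M : ℕ → Matrix (Fin n) (Fin n) ℝ} (hp : 0 < p)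
    (hM : Function.Periodic M p) (hρ : specRad (mono p M 0) < 1) :
    ∃ α > (0 : ℝ), ∃ η : ℝ, 0 ≤ η ∧ η < 1 ∧
      ∀ k (v : Fin n → ℝ), ‖mono k M 0 *ᵥ v‖ ≤ α * ‖v‖ * η ^ k := by
  obtain ⟨C, hC, t, ht0, ht1, hpow⟩ := exists_norm_pow_le_mul_pow_of_specRad_lt_one _ hρ
  obtain ⟨B, hB, hmod⟩ : ∃ B > (0 : ℝ), ∀ r < p, ‖mono r M 0‖ ≤ B :=
    ⟨1 + ∑ r ∈ Finset.range p, ‖mono r M 0‖, by positivity, fun r hr =>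
      (Finset.single_le_sum (fun j _ => norm_nonneg (mono j M 0)) (Finset.mem_range.mpr hr)).trans
        (le_add_of_nonneg_left zero_le_one)⟩
  set η := t ^ (p⁻¹ : ℝ)
  have hη0 : 0 ≤ η := by positivity
  have hη1 : η < 1 := Real.rpow_lt_one ht0.le ht1 (by positivity)
  have hdecay (k : ℕ) : t ^ (k / p) * t ≤ η ^ k :=
    Real.rpow_inv_natCast_pow ht0.le hp.ne' ▸ pow_div_mul_pow_le_pow hη0 hη1.le hp k
  refine ⟨B * C / t, by positivity, η, hη0, hη1, fun k v => ?_⟩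
  calc ‖mono k M 0 *ᵥ v‖ ≤ ‖mono k M 0‖ * ‖v‖ := Matrix.linfty_opNorm_mulVec _ _
    _ ≤ B * (C * t ^ (k / p)) * ‖v‖ := by
      rw [mono_eq_mono_mod_mul_pow_div hM k]
      gcongr
      exact (norm_mul_le _ _).trans
        (mul_le_mul (hmod _ (Nat.mod_lt k hp)) (hpow _) (norm_nonneg _) hB.le)
    _ = B * C * ‖v‖ * (t ^ (k / p) * t) / t := by field_simp
    _ ≤ B * C * ‖v‖ * η ^ k / t := by gcongr; exact hdecay k
    _ = B * C / t * ‖v‖ * η ^ k := by ring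

end LinftyOpNorm

theorem Matrix.mulVec_le_mulVec_of_nonneg {ι : Type*} [Fintype ι] {A : Matrix ι ι ℝ}
    (hA : ∀ i j, 0 ≤ A i j) {v w : ι → ℝ} (hvw : v ≤ w) : A *ᵥ v ≤ A *ᵥ w :=
  fun i => dotProduct_le_dotProduct_of_nonneg_left hvw (hA i)

theorem le_mono_mulVec_of_le_mulVec {n : ℕ} {M : ℕ → Matrix (Fin n) (Fin n) ℝ}
    (hM : ∀ k i j, 0 ≤ M k i j) {x : ℕ → Fin n → ℝ} (hx : ∀ k, x (k + 1) ≤ M k *ᵥ x k) (k : ℕ) :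
    x k ≤ mono k M 0 *ᵥ x 0 := by
  induction k with
  | zero => simp [mono]
  | succ k ih =>
    calc x (k + 1) ≤ M k *ᵥ x k := hx k
      _ ≤ M k *ᵥ (mono k M 0 *ᵥ x 0) := Matrix.mulVec_le_mulVec_of_nonneg (hM k) ih
      _ = mono (k + 1) M 0 *ᵥ x 0 := by rw [Matrix.mulVec_mulVec, mono_succ, zero_add]

section SISMatrix

variable {n : ℕ} {h : ℝ} {d : Fin n → ℝ} {b : Fin n → Fin n → ℝ}

theorem sisMatrix_apply (i j : Fin n) :
    (1 - h • Matrix.diagonal d + h • Matrix.of b) i j =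
      (if i = j then 1 - h * d i else 0) + h * b i j := by
  by_cases hij : i = j <;> simp [hij]

theorem sisMatrix_nonneg (hh : 0 ≤ h) (hb : ∀ i j, 0 ≤ b i j) (hd : ∀ i, h * d i ≤ 1)
    (i j : Fin n) : 0 ≤ (1 - h • Matrix.diagonal d + h • Matrix.of b) i j := by
  rw [sisMatrix_apply]
  have := mul_nonneg hh (hb i j)
  split_ifs <;> linarith [hd i]

theorem sisMatrix_mulVec_apply (v : Fin n → ℝ) (i : Fin n) :
    ((1 - h • Matrix.diagonal d + h • Matrix.of b) *ᵥ v) i =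
      (1 - h * d i) * v i + h * ∑ j, b i j * v j := by
  simp only [Matrix.mulVec, dotProduct, sisMatrix_apply, add_mul, ite_mul, zero_mul,
    Finset.sum_add_distrib, Finset.sum_ite_eq, Finset.mem_univ, if_true, Finset.mul_sum, mul_assoc]

end SISMatrix

theorem sis_update_mem_Icc {h d s S x : ℝ} (hh : 0 ≤ h) (hd0 : 0 ≤ d) (hd1 : h * d ≤ 1)
    (hs : s ∈ Set.Icc 0 S) (hS : h * S ≤ 1) (hx : x ∈ Set.Icc (0 : ℝ) 1) :
    x + h * ((1 - x) * s - d * x) ∈ Set.Icc (0 : ℝ) 1 := by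
  obtain ⟨hs0, hsS⟩ := hs
  obtain ⟨hx0, hx1⟩ := hx
  have hhs : h * s ≤ 1 := (mul_le_mul_of_nonneg_left hsS hh).trans hS
  constructor
  · nlinarith [mul_nonneg (mul_nonneg hh (sub_nonneg.mpr hx1)) hs0,
      mul_nonneg (sub_nonneg.mpr hd1) hx0]
  · nlinarith [mul_nonneg (sub_nonneg.mpr hx1) (sub_nonneg.mpr hhs),
      mul_nonneg (mul_nonneg hh hd0) hx0]

namespace SISdyn

variable {n : ℕ} {h : ℝ} {β : ℕ → Fin n → Fin n → ℝ} {δ : ℕ → Fin n → ℝ} {x : ℕ → Fin n → ℝ}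

theorem mem_Icc (hx : SISdyn h β δ x) (hh : 0 ≤ h) (hβ0 : ∀ k i j, 0 ≤ β k i j)
    (hδ0 : ∀ k i, 0 ≤ δ k i) (hδ1 : ∀ k i, h * δ k i ≤ 1) (hβ1 : ∀ k i, h * ∑ j, β k i j ≤ 1)
    (hx0 : ∀ i, x 0 i ∈ Set.Icc (0 : ℝ) 1) (k : ℕ) (i : Fin n) : x k i ∈ Set.Icc (0 : ℝ) 1 := by
  induction k generalizing i with
  | zero => exact hx0 i
  | succ k ih =>
    rw [hx k i]
    refine sis_update_mem_Icc hh (hδ0 k i) (hδ1 k i) ⟨?_, ?_⟩ (hβ1 k i) (ih i)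
    · exact Finset.sum_nonneg fun j _ => mul_nonneg (hβ0 k i j) (ih j).1
    · exact Finset.sum_le_sum fun j _ => mul_le_of_le_one_right (hβ0 k i j) (ih j).2

theorem le_sisMatrix_mulVec (hx : SISdyn h β δ x) (hh : 0 ≤ h) (hβ0 : ∀ k i j, 0 ≤ β k i j)
    {k : ℕ} (hxk : 0 ≤ x k) :
    x (k + 1) ≤ (1 - h • Matrix.diagonal (δ k) + h • Matrix.of (β k)) *ᵥ x k := fun i => by
  have hs : 0 ≤ ∑ j, β k i j * x k j :=
    Finset.sum_nonneg fun j _ => mul_nonneg (hβ0 k i j) (hxk j)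
  rw [sisMatrix_mulVec_apply, hx k i]
  nlinarith [mul_nonneg (mul_nonneg hh (hxk i)) hs]

end SISdyn

theorem pi_norm_le_pi_norm_of_nonneg_of_le {ι : Type*} [Fintype ι] {v w : ι → ℝ}
    (hv : 0 ≤ v) (hvw : v ≤ w) : ‖v‖ ≤ ‖w‖ := by
  refine (pi_norm_le_iff_of_nonneg (norm_nonneg w)).mpr fun i => ?_
  rw [Real.norm_of_nonneg (hv i)]
  exact (hvw i).trans ((le_abs_self _).trans (norm_le_pi_norm w i))

theorem stmt6 {n : ℕ} (p : ℕ) (hp : 0 < p) (h : ℝ) (hh : 0 < h)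
    (β : ℕ → Fin n → Fin n → ℝ) (δ : ℕ → Fin n → ℝ)
    (hperβ : ∀ k, β (k + p) = β k) (hperδ : ∀ k, δ (k + p) = δ k)
    (hβ0 : ∀ k i j, 0 ≤ β k i j) (hδ0 : ∀ k i, 0 ≤ δ k i)
    (hδ1 : ∀ k i, h * δ k i ≤ 1) (hβ1 : ∀ k i, h * ∑ j, β k i j ≤ 1)
    (Mm : ℕ → Matrix (Fin n) (Fin n) ℝ)
    (hM : ∀ k, Mm k = 1 - h • Matrix.diagonal (δ k) + h • Matrix.of (β k))
    (hρ : specRad (mono p Mm 0) < 1) :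
    ∃ α > (0:ℝ), ∃ η : ℝ, 0 ≤ η ∧ η < 1 ∧
      ∀ x : ℕ → Fin n → ℝ, SISdyn h β δ x → (∀ i, x 0 i ∈ Set.Icc (0:ℝ) 1) →
        ∀ k, ‖x k‖ ≤ α * ‖x 0‖ * η ^ k := by
  have hMper : Function.Periodic Mm p := fun k => by rw [hM, hM, hperβ, hperδ]
  obtain ⟨α, hα, η, hη0, hη1, hlin⟩ := exists_norm_mono_mulVec_le hp hMper hρ
  refine ⟨α, hα, η, hη0, hη1, fun x hx hx0 k => ?_⟩
  have hnn (k : ℕ) : 0 ≤ x k := fun i => (hx.mem_Icc hh.le hβ0 hδ0 hδ1 hβ1 hx0 k i).1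
  have hcmp : x k ≤ mono k Mm 0 *ᵥ x 0 :=
    le_mono_mulVec_of_le_mulVec (fun k => hM k ▸ sisMatrix_nonneg hh.le (hβ0 k) (hδ1 k))
      (fun k => hM k ▸ hx.le_sisMatrix_mulVec hh.le hβ0 (hnn k)) k
  exact (pi_norm_le_pi_norm_of_nonneg_of_le (hnn k) hcmp).trans (hlin k (x 0))
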